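/- For pairwise distinct positive reals x₁, x₂, x₃ with K < 0 (resp. K > 0), the unique inflection point p* of L(p) = (Σᵢ xᵢ^p)/(Σᵢ xᵢ^(p-1)) satisfies p* < 1 (resp. p* > 1), where K = (x₁−x₂)log(x₁/x₂)log(x₁x₂/x₃²) + (x₁−x₃)log(x₁/x₃)log(x₁x₃/x₂²) + (x₂−x₃)log(x₂/x₃)log(x₂x₃/x₁²). -/

import Mathlib

/-!
Write `aᵢ = log xᵢ` and, at an inflection point `p`, `wᵢ = xᵢ ^ (p - 1)`. The derivatives of
`∑ xᵢ ^ q` and `∑ xᵢ ^ (q - 1)` are the weighted power sums `∑ wᵢ xᵢ aᵢᵏ` and `∑ wᵢ aᵢᵏ`, and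
after clearing the positive denominator, `L''(p) = 0` becomes, for three points, the identity
`2 w₁ w₂ w₃ K = ∑ᵢ ∑ⱼ (aᵢ - aⱼ)² wᵢ wⱼ (wᵢ - wⱼ)(xᵢ - xⱼ)`.
For `p ≥ 1` the weights increase with `xᵢ`, so the right-hand side is `≥ 0` and `K ≥ 0`;
for `p ≤ 1` they decrease and `K ≤ 0`.
-/

open Real Finset

theorem iteratedDeriv_two_div {𝕜 : Type*} [NontriviallyNormedField 𝕜] {u u' u'' v v' v'' : 𝕜 → 𝕜}
    (hu : ∀ q, HasDerivAt u (u' q) q) (hu' : ∀ q, HasDerivAt u' (u'' q) q)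
    (hv : ∀ q, HasDerivAt v (v' q) q) (hv' : ∀ q, HasDerivAt v' (v'' q) q)
    (hv₀ : ∀ q, v q ≠ 0) (p : 𝕜) :
    iteratedDeriv 2 (fun q => u q / v q) p =
      ((u'' p * v p - u p * v'' p) * v p - 2 * (u' p * v p - u p * v' p) * v' p) / v p ^ 3 := by
  have hderiv : deriv (fun q => u q / v q) = fun q => (u' q * v q - u q * v' q) / v q ^ 2 :=
    funext fun q => ((hu q).div (hv q) (hv₀ q)).deriv
  have hderiv₂ : HasDerivAt (fun q => (u' q * v q - u q * v' q) / v q ^ 2) _ p :=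
    (((hu' p).fun_mul (hv p)).fun_sub ((hu p).fun_mul (hv' p))).div ((hv p).fun_pow 2)
      (pow_ne_zero 2 (hv₀ p))
  rw [iteratedDeriv_succ, iteratedDeriv_one, hderiv, hderiv₂.deriv]
  have := hv₀ p
  field_simp
  ring

/-- `(f / g)'' = curvatureNumerator u v / g ^ 3` when `f⁽ᵏ⁾ = u k` and `g⁽ᵏ⁾ = v k`. -/
def curvatureNumerator (u v : ℕ → ℝ) : ℝ :=
  (u 2 * v 0 - u 0 * v 2) * v 0 - 2 * (u 1 * v 0 - u 0 * v 1) * v 1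

section LehmerMean

variable {ι : Type*} [Fintype ι]

def weightedPowerSum (w a : ι → ℝ) (k : ℕ) : ℝ := ∑ i, w i * a i ^ k

theorem hasDerivAt_weightedPowerSum_rpow {x : ι → ℝ} (hx : ∀ i, 0 < x i) (s : ℝ) (k : ℕ)
    (q : ℝ) :
    HasDerivAt (fun q => weightedPowerSum (fun i => x i ^ (q - s)) (fun i => log (x i)) k)
      (weightedPowerSum (fun i => x i ^ (q - s)) (fun i => log (x i)) (k + 1)) q := by
  refine HasDerivAt.fun_sum fun i _ => ?_
  exact ((((hasDerivAt_id q).sub_const s).const_rpow (hx i)).mul_const (log (x i) ^ k)).congr_deriv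
    (by simp only [id]; ring)

theorem weightedPowerSum_rpow_pos [Nonempty ι] {x : ι → ℝ} (hx : ∀ i, 0 < x i) (a : ι → ℝ)
    (q : ℝ) : 0 < weightedPowerSum (fun i => x i ^ q) a 0 := by
  simpa [weightedPowerSum] using
    sum_pos (fun i _ => rpow_pos_of_pos (hx i) q) univ_nonempty

noncomputable def lehmerMean (x : ι → ℝ) (q : ℝ) : ℝ :=
  (∑ i, x i ^ q) / ∑ i, x i ^ (q - 1)

theorem curvatureNumerator_eq_zero_of_iteratedDeriv_lehmerMean [Nonempty ι] {x : ι → ℝ}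
    (hx : ∀ i, 0 < x i) {p : ℝ}
    (hp : iteratedDeriv 2 (lehmerMean x) p = 0) :
    curvatureNumerator (weightedPowerSum (fun i => x i ^ (p - 1) * x i) fun i => log (x i))
      (weightedPowerSum (fun i => x i ^ (p - 1)) fun i => log (x i)) = 0 := by
  set M : ℝ → ℕ → ℝ → ℝ := fun s k q =>
    weightedPowerSum (fun i => x i ^ (q - s)) (fun i => log (x i)) k with hM
  have hL : lehmerMean x = fun q => M 0 0 q / M 1 0 q := by
    funext q
    simp [hM, lehmerMean, weightedPowerSum]
  have hV : ∀ q, 0 < M 1 0 q := fun q => weightedPowerSum_rpow_pos hx _ _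
  rw [hL, iteratedDeriv_two_div (hasDerivAt_weightedPowerSum_rpow hx 0 0)
    (hasDerivAt_weightedPowerSum_rpow hx 0 1) (hasDerivAt_weightedPowerSum_rpow hx 1 0)
    (hasDerivAt_weightedPowerSum_rpow hx 1 1) (fun q => (hV q).ne'), div_eq_zero_iff,
    or_iff_left (pow_ne_zero 3 (hV p).ne')] at hp
  have hU : (fun i => x i ^ (p - 1) * x i) = fun i => x i ^ (p - 0) := by
    funext i
    rw [sub_zero, rpow_sub_one (hx i).ne', div_mul_cancel₀ _ (hx i).ne']
  rw [hU, curvatureNumerator]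
  exact hp

end LehmerMean

/-- The quantity `K` of the statement, with `a i` standing for `log (x i)`. -/
def lehmerK (x a : Fin 3 → ℝ) : ℝ :=
  (x 0 - x 1) * (a 0 - a 1) * (a 0 + a 1 - 2 * a 2) +
    (x 0 - x 2) * (a 0 - a 2) * (a 0 + a 2 - 2 * a 1) +
    (x 1 - x 2) * (a 1 - a 2) * (a 1 + a 2 - 2 * a 0)

theorem two_mul_curvatureNumerator_fin_three (x a w : Fin 3 → ℝ) :
    2 * curvatureNumerator (weightedPowerSum (fun i => w i * x i) a) (weightedPowerSum w a) =
      2 * (w 0 * w 1 * w 2) * lehmerK x a -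
        ∑ i, ∑ j, (a i - a j) ^ 2 * w i * w j * ((w i - w j) * (x i - x j)) := by
  simp only [curvatureNumerator, weightedPowerSum, lehmerK, Fin.sum_univ_three]
  ring

section Sign

variable {x a w : Fin 3 → ℝ}

theorem lehmerK_nonneg_of_monovary (hw : ∀ i, 0 < w i)
    (hN : curvatureNumerator (weightedPowerSum (fun i => w i * x i) a) (weightedPowerSum w a) = 0)
    (hwx : Monovary w x) : 0 ≤ lehmerK x a := by
  have hsum : 0 ≤ ∑ i, ∑ j, (a i - a j) ^ 2 * w i * w j * ((w i - w j) * (x i - x j)) :=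
    sum_nonneg fun i _ => sum_nonneg fun j _ =>
      mul_nonneg (by positivity [hw i, hw j]) (hwx.sub_mul_sub_nonneg j i)
  have hw₃ : 0 < 2 * (w 0 * w 1 * w 2) := by positivity [hw 0, hw 1, hw 2]
  have hid := two_mul_curvatureNumerator_fin_three x a w
  rw [hN, mul_zero] at hid
  exact nonneg_of_mul_nonneg_right (by linarith) hw₃

theorem lehmerK_nonpos_of_antivary (hw : ∀ i, 0 < w i)
    (hN : curvatureNumerator (weightedPowerSum (fun i => w i * x i) a) (weightedPowerSum w a) = 0)
    (hwx : Antivary w x) : lehmerK x a ≤ 0 := by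
  have hsum : ∑ i, ∑ j, (a i - a j) ^ 2 * w i * w j * ((w i - w j) * (x i - x j)) ≤ 0 :=
    sum_nonpos fun i _ => sum_nonpos fun j _ =>
      mul_nonpos_of_nonneg_of_nonpos (by positivity [hw i, hw j])
        (hwx.sub_mul_sub_nonpos j i)
  have hw₃ : 0 < 2 * (w 0 * w 1 * w 2) := by positivity [hw 0, hw 1, hw 2]
  have hid := two_mul_curvatureNumerator_fin_three x a w
  rw [hN, mul_zero] at hid
  exact nonpos_of_mul_nonpos_right (by linarith) hw₃

end Sign

theorem log_mul_div_mul_self {x y z : ℝ} (hx : 0 < x) (hy : 0 < y) (hz : 0 < z) :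
    log (x * y / (z * z)) = log x + log y - 2 * log z := by
  rw [log_div (by positivity) (by positivity), log_mul hx.ne' hy.ne', log_mul hz.ne' hz.ne']
  ring

theorem lehmer_three_inflection_location_general (x₁ x₂ x₃ : ℝ)
    (hx₁ : 0 < x₁) (hx₂ : 0 < x₂) (hx₃ : 0 < x₃)
    (p' : ℝ)
    (hp' : iteratedDeriv 2
      (fun q : ℝ => (x₁ ^ q + x₂ ^ q + x₃ ^ q) /
        (x₁ ^ (q - 1) + x₂ ^ (q - 1) + x₃ ^ (q - 1))) p' = 0) :
    (((x₁ - x₂) * Real.log (x₁ / x₂) * Real.log (x₁ * x₂ / (x₃ * x₃)) +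
        (x₁ - x₃) * Real.log (x₁ / x₃) * Real.log (x₁ * x₃ / (x₂ * x₂)) +
        (x₂ - x₃) * Real.log (x₂ / x₃) * Real.log (x₂ * x₃ / (x₁ * x₁))) < 0 →
      p' < 1) ∧
    (0 < ((x₁ - x₂) * Real.log (x₁ / x₂) * Real.log (x₁ * x₂ / (x₃ * x₃)) +
        (x₁ - x₃) * Real.log (x₁ / x₃) * Real.log (x₁ * x₃ / (x₂ * x₂)) +
        (x₂ - x₃) * Real.log (x₂ / x₃) * Real.log (x₂ * x₃ / (x₁ * x₁))) →
      1 < p') := by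
  set x : Fin 3 → ℝ := ![x₁, x₂, x₃]
  have hx : ∀ i, 0 < x i := by
    intro i
    fin_cases i <;> assumption
  have hL : lehmerMean x = fun q : ℝ => (x₁ ^ q + x₂ ^ q + x₃ ^ q) /
      (x₁ ^ (q - 1) + x₂ ^ (q - 1) + x₃ ^ (q - 1)) := by
    funext q
    simp [lehmerMean, x, Fin.sum_univ_three]
  have hK : (x₁ - x₂) * log (x₁ / x₂) * log (x₁ * x₂ / (x₃ * x₃)) +
      (x₁ - x₃) * log (x₁ / x₃) * log (x₁ * x₃ / (x₂ * x₂)) +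
      (x₂ - x₃) * log (x₂ / x₃) * log (x₂ * x₃ / (x₁ * x₁)) = lehmerK x fun i => log (x i) := by
    simp only [lehmerK, x, Matrix.cons_val_zero, Matrix.cons_val_one, Matrix.cons_val_two,
      log_div hx₁.ne' hx₂.ne', log_div hx₁.ne' hx₃.ne', log_div hx₂.ne' hx₃.ne',
      log_mul_div_mul_self hx₁ hx₂ hx₃, log_mul_div_mul_self hx₁ hx₃ hx₂,
      log_mul_div_mul_self hx₂ hx₃ hx₁]
    rfl
  rw [← hL] at hp'
  have hN := curvatureNumerator_eq_zero_of_iteratedDeriv_lehmerMean hx hp'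
  have hw : ∀ i, 0 < x i ^ (p' - 1) := fun i => rpow_pos_of_pos (hx i) _
  rw [hK]
  refine ⟨fun hneg => ?_, fun hpos => ?_⟩
  · by_contra! hp
    exact hneg.not_ge <| lehmerK_nonneg_of_monovary hw hN fun i j hij =>
      rpow_le_rpow (hx i).le hij.le (by linarith)
  · by_contra! hp
    exact hpos.not_ge <| lehmerK_nonpos_of_antivary hw hN fun i j hij =>
      rpow_le_rpow_of_nonpos (hx i) hij.le (by linarith)

theorem lehmer_three_inflection_location (x₁ x₂ x₃ : ℝ)
    (hx₁ : 0 < x₁) (hx₂ : 0 < x₂) (hx₃ : 0 < x₃)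
    (h12 : x₁ ≠ x₂) (h13 : x₁ ≠ x₃) (h23 : x₂ ≠ x₃)
    (p' : ℝ)
    (hp' : iteratedDeriv 2
      (fun q : ℝ => (x₁ ^ q + x₂ ^ q + x₃ ^ q) /
        (x₁ ^ (q - 1) + x₂ ^ (q - 1) + x₃ ^ (q - 1))) p' = 0) :
    (((x₁ - x₂) * Real.log (x₁ / x₂) * Real.log (x₁ * x₂ / (x₃ * x₃)) +
        (x₁ - x₃) * Real.log (x₁ / x₃) * Real.log (x₁ * x₃ / (x₂ * x₂)) +
        (x₂ - x₃) * Real.log (x₂ / x₃) * Real.log (x₂ * x₃ / (x₁ * x₁))) < 0 →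
      p' < 1) ∧
    (0 < ((x₁ - x₂) * Real.log (x₁ / x₂) * Real.log (x₁ * x₂ / (x₃ * x₃)) +
        (x₁ - x₃) * Real.log (x₁ / x₃) * Real.log (x₁ * x₃ / (x₂ * x₂)) +
        (x₂ - x₃) * Real.log (x₂ / x₃) * Real.log (x₂ * x₃ / (x₁ * x₁))) →
      1 < p') :=
  lehmer_three_inflection_location_general x₁ x₂ x₃ hx₁ hx₂ hx₃ p' hp'
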